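/- If a model space prior π has a pFS representation with maps ρ and λ, and L(γ) > 0 denotes the likelihood of model γ (so the posterior is π(γ|D) ∝ π(γ)L(γ)), then the posterior π(·|D) has a pFS representation with maps ρ(γ|D) = ρ(γ)·BF₀(γ)/φ(γ) and λ_j(γ|D) = λ_j(γ)·(1-ρ(γ))·φ(γ^{+j}) / (φ(γ) - ρ(γ)·BF₀(γ)) whenever ρ(γ) < 1 (and ρ(γ|D)=1, λ_j(γ|D)=λ_j(γ) when ρ(γ)=1), where BF₀(γ) = L(γ)/L(0) and φ is defined recursively by φ(γ) = BF₀(γ) for |γ| = p and φ(γ) = ρ(γ)BF₀(γ) + (1-ρ(γ))·Σ_{j: γ_j=0} λ_j(γ)φ(γ^{+j}) for |γ| < p. -/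

import Mathlib

/-!
Let `f(γ, γ')` be the probability that the pFS chain, standing at `γ` with `n` decisions left,
ends at `γ'`; it obeys `f(γ, ·) = ρ(γ) δ_γ + (1 - ρ(γ)) ∑ⱼ λⱼ(γ) f(γ^{+j}, ·)`. Summing the
path probabilities out one decision at a time, from the last to the first, identifies the law
of the final model with `f(0, ·)`. The recursion for `φ` says `φ(γ) = ∑_{γ'} f(γ, γ') BF₀(γ')`,
and the posterior maps are the Doob transform of `(ρ, λ)` by `φ`:
`ρ(γ|D) φ(γ) = ρ(γ) BF₀(γ)` and `(1 - ρ(γ|D)) λⱼ(γ|D) φ(γ) = (1 - ρ(γ)) λⱼ(γ) φ(γ^{+j})`.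
Hence `φ(γ) f_post(γ, γ') = BF₀(γ') f(γ, γ')` by induction, which at `γ = 0` is
`π(γ'|D) ∝ π(γ') L(γ')` with normalising constant `L(0) φ(0)`.
-/

open Finset

attribute [local instance] Classical.propDecidable

noncomputable section

/-- A model is an inclusion-indicator vector in `{0,1}^p`. -/
abbrev Model (p : ℕ) := Fin p → Bool

/-- Model size `|γ|`: the number of included variables. -/
def msize {p : ℕ} (γ : Model p) : ℕ := (Finset.univ.filter (fun j => γ j = true)).card

/-- `γ^{+j}` : the model `γ` with variable `j` added. -/
def mplus {p : ℕ} (γ : Model p) (j : Fin p) : Model p := Function.update γ j true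

/-- The null model. -/
def mnull (p : ℕ) : Model p := fun _ => false

/-- A sequence of decision variables `(S_t, J_t)`, `t = 1, …, p`. -/
abbrev Dec (p : ℕ) := Fin p → Bool × Fin p

/-- The tentative model `γ_(t)` determined by the decisions `d`. -/
def tent {p : ℕ} (d : Dec p) : ℕ → Model p
  | 0 => mnull p
  | t + 1 =>
    if h : t < p then
      if (d ⟨t, h⟩).1 = true then tent d t
      else mplus (tent d t) (d ⟨t, h⟩).2
    else tent d t

/-- The procedure has stopped strictly before step `t+1`, i.e. some `S_s = 1` with `s ≤ t`. -/
def stopB {p : ℕ} (d : Dec p) (t : ℕ) : Prop :=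
  ∃ s : Fin p, (s : ℕ) < t ∧ (d s).1 = true

/-- Probability of the `t`-th pair of decisions of a pFS procedure with stopping map `ρ`
and selection map `lam` (once stopped, the stopping indicator stays 1 with probability 1;
the selection variable is always drawn from the multinomial with weights `lam`). -/
def stepProb {p : ℕ} (ρ : Model p → ℝ) (lam : Model p → Fin p → ℝ)
    (d : Dec p) (t : Fin p) : ℝ :=
  (if stopB d (t : ℕ) then (if (d t).1 = true then 1 else 0)
   else if (d t).1 = true then ρ (tent d (t : ℕ)) else 1 - ρ (tent d (t : ℕ)))
  * lam (tent d (t : ℕ)) (d t).2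

/-- Probability of a whole decision sequence under the pFS procedure `(ρ, lam)`. -/
def pathProb {p : ℕ} (ρ : Model p → ℝ) (lam : Model p → Fin p → ℝ) (d : Dec p) : ℝ :=
  ∏ t : Fin p, stepProb ρ lam d t

/-- Marginal probability that the final model `γ_(p)` equals `γ`. -/
def finalProb {p : ℕ} (ρ : Model p → ℝ) (lam : Model p → Fin p → ℝ) (γ : Model p) : ℝ :=
  ∑ d : Dec p, if tent d p = γ then pathProb ρ lam d else 0

/-- Marginal probability that the final model has size `s`. -/
def sizeProb {p : ℕ} (ρ : Model p → ℝ) (lam : Model p → Fin p → ℝ) (s : ℕ) : ℝ :=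
  ∑ d : Dec p, if msize (tent d p) = s then pathProb ρ lam d else 0

/-- Validity of a stopping-probability map: values in `[0,1]` on non-full models. -/
def ValidStop {p : ℕ} (ρ : Model p → ℝ) : Prop :=
  ∀ γ : Model p, msize γ < p → 0 ≤ ρ γ ∧ ρ γ ≤ 1

/-- Validity of a selection-probability map: nonnegative, summing to one, and vanishing on
already-included variables, on non-full models. -/
def ValidSel {p : ℕ} (lam : Model p → Fin p → ℝ) : Prop :=
  ∀ γ : Model p, msize γ < p →
    (∀ j, 0 ≤ lam γ j) ∧ (∑ j, lam γ j) = 1 ∧ (∀ j, γ j = true → lam γ j = 0)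

/-- `(ρ, lam)` specify a valid pFS procedure. -/
def IsPFS {p : ℕ} (ρ : Model p → ℝ) (lam : Model p → Fin p → ℝ) : Prop :=
  ValidStop ρ ∧ ValidSel lam

/-- The Markov transition kernel of the pFS chain at step `t` (from `γ_(t-1)` to `γ_(t)`). -/
def kernel {p : ℕ} (ρ : Model p → ℝ) (lam : Model p → Fin p → ℝ)
    (t : ℕ) (γ γ' : Model p) : ℝ :=
  if msize γ < t - 1 then (if γ' = γ then 1 else 0)
  else if msize γ = t - 1 then
    (if γ' = γ then ρ γ
     else ∑ j ∈ Finset.univ.filter (fun j => γ j = false ∧ γ' = mplus γ j), (1 - ρ γ) * lam γ j)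
  else 0

/-- Bayes factor of `γ` against the null model: `BF₀(γ) = L(γ)/L(0)`. -/
def bf0 {p : ℕ} (L : Model p → ℝ) (γ : Model p) : ℝ := L γ / L (mnull p)

/-- The posterior stopping map: `ρ(γ|D) = ρ(γ)·BF₀(γ)/φ(γ)` when `ρ(γ) < 1`, and `1` when
`ρ(γ) = 1`. -/
def rhoPost {p : ℕ} (ρ BF φf : Model p → ℝ) : Model p → ℝ :=
  fun γ => if ρ γ = 1 then 1 else ρ γ * BF γ / φf γ

/-- The posterior selection map:
`λ_j(γ|D) = λ_j(γ)·(1-ρ(γ))·φ(γ^{+j})/(φ(γ) - ρ(γ)·BF₀(γ))` when `ρ(γ) < 1`, and `λ_j(γ)`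
when `ρ(γ) = 1`. -/
def lamPost {p : ℕ} (ρ : Model p → ℝ) (lam : Model p → Fin p → ℝ) (BF φf : Model p → ℝ) :
    Model p → Fin p → ℝ :=
  fun γ j => if ρ γ = 1 then lam γ j
    else lam γ j * ((1 - ρ γ) * φf (mplus γ j)) / (φf γ - ρ γ * BF γ)

open Function

theorem Fintype.sum_sum_update {ι X M : Type*} [Fintype ι] [DecidableEq ι] [Fintype X]
    [AddCommMonoid M] (f : (ι → X) → M) (i : ι) :
    ∑ d, ∑ x, f (update d i x) = Fintype.card X • ∑ d, f d := by
  let e := Equiv.funSplitAt i X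
  have hupdate : ∀ y x r, update (e.symm (y, r)) i x = e.symm (x, r) := fun y x r =>
    e.injective (Prod.ext (by simp [e]) (funext fun j => by simp [e, update_apply, j.2]))
  simp only [← e.symm.sum_comp, Fintype.sum_prod_type, hupdate, sum_const, card_univ]
  rw [sum_comm (s := univ) (t := univ) (f := fun (x : X) r => f (e.symm (x, r))), smul_sum]

section Path

variable {p : ℕ}

theorem msize_le (γ : Model p) : msize γ ≤ p :=
  (card_filter_le _ _).trans_eq (by simp)

theorem msize_mnull (p : ℕ) : msize (mnull p) = 0 := by simp [msize, mnull]

theorem mplus_eq_self {γ : Model p} {j : Fin p} (h : γ j = true) : mplus γ j = γ :=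
  update_eq_self_iff.2 h.symm

theorem msize_mplus {γ : Model p} {j : Fin p} (h : γ j = false) :
    msize (mplus γ j) = msize γ + 1 := by
  have hfilter : univ.filter (fun i => mplus γ j i = true)
      = insert j (univ.filter (fun i => γ i = true)) := by
    ext i
    by_cases hij : i = j <;> simp [mplus, update_apply, hij, h]
  rw [msize, hfilter, card_insert_of_notMem (by simp [h]), msize]

theorem msize_mplus_le (γ : Model p) (j : Fin p) : msize (mplus γ j) ≤ msize γ + 1 := by
  cases hj : γ j
  · rw [msize_mplus hj]
  · rw [mplus_eq_self hj]; omega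

theorem tent_succ (d : Dec p) {n : ℕ} (hn : n < p) :
    tent d (n + 1) = if (d ⟨n, hn⟩).1 then tent d n else mplus (tent d n) (d ⟨n, hn⟩).2 := by
  rw [tent, dif_pos hn]

theorem msize_tent_le (d : Dec p) (n : ℕ) : msize (tent d n) ≤ n := by
  induction n with
  | zero => simp [tent, mnull, msize]
  | succ n ih =>
    by_cases hn : n < p
    · rw [tent_succ d hn]
      split
      · omega
      · exact (msize_mplus_le _ _).trans (by omega)
    · rw [tent, dif_neg hn]; omega

theorem stopB_succ (d : Dec p) {n : ℕ} (hn : n < p) :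
    stopB d (n + 1) ↔ stopB d n ∨ (d ⟨n, hn⟩).1 = true := by
  constructor
  · rintro ⟨s, hs, hd⟩
    rcases Nat.lt_succ_iff_lt_or_eq.1 hs with hs | hs
    · exact .inl ⟨s, hs, hd⟩
    · exact .inr (by rwa [show s = ⟨n, hn⟩ from Fin.ext hs] at hd)
  · rintro (⟨s, hs, hd⟩ | hd)
    · exact ⟨s, by omega, hd⟩
    · exact ⟨⟨n, hn⟩, by simp, hd⟩

theorem tent_congr {d d' : Dec p} {n : ℕ} (h : ∀ s : Fin p, (s : ℕ) < n → d s = d' s) :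
    tent d n = tent d' n := by
  induction n with
  | zero => rfl
  | succ n ih =>
    by_cases hn : n < p
    · rw [tent_succ d hn, tent_succ d' hn, h ⟨n, hn⟩ (by simp), ih fun s hs => h s (by omega)]
    · rw [tent, tent, dif_neg hn, dif_neg hn, ih fun s hs => h s (by omega)]

theorem stopB_congr {d d' : Dec p} {n : ℕ} (h : ∀ s : Fin p, (s : ℕ) < n → d s = d' s) :
    stopB d n ↔ stopB d' n :=
  exists_congr fun s =>
    ⟨fun ⟨hs, hd⟩ => ⟨hs, h s hs ▸ hd⟩, fun ⟨hs, hd⟩ => ⟨hs, (h s hs).symm ▸ hd⟩⟩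

theorem stepProb_congr (ρ : Model p → ℝ) (lam : Model p → Fin p → ℝ) {d d' : Dec p}
    {t : Fin p} (h : ∀ s : Fin p, (s : ℕ) ≤ t → d s = d' s) :
    stepProb ρ lam d t = stepProb ρ lam d' t := by
  have hlt : ∀ s : Fin p, (s : ℕ) < t → d s = d' s := fun s hs => h s hs.le
  simp only [stepProb, tent_congr hlt, propext (stopB_congr hlt), h t le_rfl]

theorem update_apply_of_lt {n : ℕ} (hn : n < p) (d : Dec p) (x : Bool × Fin p) {s : Fin p}
    (hs : (s : ℕ) < n) : update d ⟨n, hn⟩ x s = d s :=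
  update_of_ne (fun h => by simp [h] at hs) _ _

theorem filter_lt_succ_eq_insert {n : ℕ} (hn : n < p) :
    univ.filter (fun t : Fin p => (t : ℕ) < n + 1)
      = insert ⟨n, hn⟩ (univ.filter (fun t : Fin p => (t : ℕ) < n)) := by
  ext t
  simp only [mem_filter, mem_univ, true_and, mem_insert, Fin.ext_iff]
  omega

end Path

section Recursion

variable {p : ℕ} (ρ : Model p → ℝ) (lam : Model p → Fin p → ℝ)

/-- Probability that the pFS chain, standing at `γ` before its next stopping decision with `n`
decisions left, ends at `γ'`. -/
def finalProbFrom : ℕ → Model p → Model p → ℝ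
  | 0, γ, γ' => if γ = γ' then 1 else 0
  | n + 1, γ, γ' =>
      ρ γ * (if γ = γ' then 1 else 0) +
        (1 - ρ γ) * ∑ j, lam γ j * finalProbFrom n (mplus γ j) γ'

/-- Conditional probability that the final model is `γ'` given the first `n` decisions of `d`. -/
def finalProbGiven (γ' : Model p) (n : ℕ) (d : Dec p) : ℝ :=
  if stopB d n then (if tent d n = γ' then 1 else 0)
  else finalProbFrom ρ lam (p - n) (tent d n) γ'

/-- The probability of the first `n` decisions of `d` times the conditional probability of the
final model `γ'` given them. It ignores the remaining decisions, so summing it over all `d`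
counts each prefix `card (Bool × Fin p) ^ (p - n)` times. -/
def pathWeight (γ' : Model p) (n : ℕ) (d : Dec p) : ℝ :=
  (∏ t ∈ univ.filter (fun t : Fin p => (t : ℕ) < n), stepProb ρ lam d t) *
    finalProbGiven ρ lam γ' n d

variable {ρ lam} {γ' : Model p}

theorem stepProb_mul_finalProbGiven_update {n : ℕ} (hn : n < p) (d : Dec p)
    (x : Bool × Fin p) :
    stepProb ρ lam (update d ⟨n, hn⟩ x) ⟨n, hn⟩ *
        finalProbGiven ρ lam γ' (n + 1) (update d ⟨n, hn⟩ x)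
      = lam (tent d n) x.2 *
        if stopB d n then (if x.1 then (if tent d n = γ' then 1 else 0) else 0)
        else if x.1 then ρ (tent d n) * (if tent d n = γ' then 1 else 0)
        else (1 - ρ (tent d n)) *
          finalProbFrom ρ lam (p - (n + 1)) (mplus (tent d n) x.2) γ' := by
  have hbefore : ∀ s : Fin p, (s : ℕ) < n → update d ⟨n, hn⟩ x s = d s := fun _ =>
    update_apply_of_lt hn d x
  simp only [stepProb, finalProbGiven, tent_succ _ hn, propext (stopB_succ _ hn), update_self,
    tent_congr hbefore, propext (stopB_congr hbefore)]
  by_cases hs : stopB d n <;> cases x.1 <;> simp [hs, mul_comm, mul_left_comm]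

theorem sum_stepProb_mul_finalProbGiven_update (hlam : ValidSel lam) {n : ℕ} (hn : n < p)
    (d : Dec p) :
    ∑ x, stepProb ρ lam (update d ⟨n, hn⟩ x) ⟨n, hn⟩ *
        finalProbGiven ρ lam γ' (n + 1) (update d ⟨n, hn⟩ x)
      = finalProbGiven ρ lam γ' n d := by
  have hsum : ∑ j, lam (tent d n) j = 1 :=
    (hlam _ ((msize_tent_le d n).trans_lt hn)).2.1
  simp only [stepProb_mul_finalProbGiven_update, Fintype.sum_prod_type, Fintype.sum_bool]
  by_cases hs : stopB d n
  · simp [finalProbGiven, hs, hsum]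
  · rw [finalProbGiven, if_neg hs, show p - n = p - (n + 1) + 1 by omega, finalProbFrom]
    simp only [hs, if_false, if_true, Bool.false_eq_true, ← sum_mul, hsum, one_mul, mul_sum]
    exact congrArg _ (sum_congr rfl fun j _ => mul_left_comm _ _ _)

theorem sum_pathWeight_update (hlam : ValidSel lam) {n : ℕ} (hn : n < p) (d : Dec p) :
    ∑ x, pathWeight ρ lam γ' (n + 1) (update d ⟨n, hn⟩ x) = pathWeight ρ lam γ' n d := by
  have hprefix : ∀ x, ∀ t ∈ univ.filter (fun t : Fin p => (t : ℕ) < n),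
      stepProb ρ lam (update d ⟨n, hn⟩ x) t = stepProb ρ lam d t := fun x t ht =>
    stepProb_congr ρ lam fun _ hs => update_apply_of_lt hn d x (hs.trans_lt (mem_filter.1 ht).2)
  have hnew : (⟨n, hn⟩ : Fin p) ∉ univ.filter (fun t : Fin p => (t : ℕ) < n) := by simp
  rw [pathWeight, ← sum_stepProb_mul_finalProbGiven_update hlam hn d, mul_sum]
  refine sum_congr rfl fun x _ => ?_
  rw [pathWeight, filter_lt_succ_eq_insert hn, prod_insert hnew, prod_congr rfl (hprefix x)]
  ring

theorem sum_pathWeight_succ (hlam : ValidSel lam) {n : ℕ} (hn : n < p) :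
    ∑ d, pathWeight ρ lam γ' n d
      = Fintype.card (Bool × Fin p) • ∑ d, pathWeight ρ lam γ' (n + 1) d := by
  rw [← Fintype.sum_sum_update _ ⟨n, hn⟩]
  exact sum_congr rfl fun d _ => (sum_pathWeight_update hlam hn d).symm

theorem sum_pathWeight_zero (hlam : ValidSel lam) {n : ℕ} (hn : n ≤ p) :
    ∑ d, pathWeight ρ lam γ' 0 d
      = Fintype.card (Bool × Fin p) ^ n • ∑ d, pathWeight ρ lam γ' n d := by
  induction n with
  | zero => simp
  | succ n ih => rw [ih (by omega), sum_pathWeight_succ hlam (by omega), smul_smul, pow_succ]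

theorem pathWeight_zero (d : Dec p) :
    pathWeight ρ lam γ' 0 d = finalProbFrom ρ lam p (mnull p) γ' := by
  simp [pathWeight, finalProbGiven, stopB, tent]

theorem pathWeight_self (d : Dec p) :
    pathWeight ρ lam γ' p d = if tent d p = γ' then pathProb ρ lam d else 0 := by
  have hstopped : finalProbGiven ρ lam γ' p d = if tent d p = γ' then 1 else 0 := by
    by_cases hs : stopB d p <;> simp [finalProbGiven, hs, finalProbFrom]
  simp [pathWeight, hstopped, pathProb]

theorem finalProb_eq_finalProbFrom (hlam : ValidSel lam) (γ' : Model p) :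
    finalProb ρ lam γ' = finalProbFrom ρ lam p (mnull p) γ' := by
  have h := sum_pathWeight_zero (ρ := ρ) (γ' := γ') hlam le_rfl
  simp only [pathWeight_zero, pathWeight_self, sum_const, card_univ, Fintype.card_fun,
    Fintype.card_fin] at h
  have hcard : Fintype.card (Bool × Fin p) ^ p ≠ 0 := by
    have : Nonempty (Dec p) := ⟨fun t => (true, t)⟩
    simpa only [Fintype.card_fun, Fintype.card_fin] using Fintype.card_ne_zero (α := Dec p)
  exact (smul_right_injective ℝ hcard h).symm

end Recursion

section Posterior

variable {p : ℕ} {ρ : Model p → ℝ} {lam : Model p → Fin p → ℝ}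

theorem sum_filter_lam_mul_eq (hlam : ValidSel lam) {γ : Model p} (hγ : msize γ < p)
    (f : Fin p → ℝ) :
    ∑ j ∈ univ.filter (fun j => γ j = false), lam γ j * f j = ∑ j, lam γ j * f j := by
  refine sum_filter_of_ne fun j _ hj => ?_
  cases hγj : γ j
  · rfl
  · simp [(hlam γ hγ).2.2 j hγj] at hj

theorem sum_filter_lam_mul_pos (hlam : ValidSel lam) {γ : Model p} (hγ : msize γ < p)
    {f : Fin p → ℝ} (hf : ∀ j, γ j = false → 0 < f j) :
    0 < ∑ j ∈ univ.filter (fun j => γ j = false), lam γ j * f j := by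
  obtain ⟨hnonneg, hsum, -⟩ := hlam γ hγ
  have hsum' : ∑ j ∈ univ.filter (fun j => γ j = false), lam γ j = 1 := by
    simpa only [mul_one, hsum] using sum_filter_lam_mul_eq hlam hγ fun _ => 1
  obtain ⟨j, hj, hlamj⟩ := exists_ne_zero_of_sum_ne_zero (hsum'.trans_ne one_ne_zero)
  refine sum_pos' (fun k hk => mul_nonneg (hnonneg k) (hf k (by simpa using hk)).le)
    ⟨j, hj, mul_pos ((hnonneg j).lt_of_ne' hlamj) (hf j (by simpa using hj))⟩

/-- `φ` is the expected value of `B` at the final model of the pFS chain `(ρ, lam)`, as a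
function of the current model: the paper's `φ` for `B = BF₀`. -/
structure IsHarmonicExtension (ρ : Model p → ℝ) (lam : Model p → Fin p → ℝ)
    (B φ : Model p → ℝ) : Prop where
  eq_of_full : ∀ γ, msize γ = p → φ γ = B γ
  eq_of_lt : ∀ γ, msize γ < p → φ γ = ρ γ * B γ +
    (1 - ρ γ) * ∑ j ∈ univ.filter (fun j => γ j = false), lam γ j * φ (mplus γ j)

namespace IsHarmonicExtension

variable {B φ : Model p → ℝ} (hφ : IsHarmonicExtension ρ lam B φ)
include hφ

theorem pos (hρ : ValidStop ρ) (hlam : ValidSel lam) (hB : ∀ γ, 0 < B γ) (γ : Model p) :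
    0 < φ γ := by
  induction hk : p - msize γ generalizing γ with
  | zero => rw [hφ.eq_of_full γ (le_antisymm (msize_le γ) (by omega))]; exact hB γ
  | succ k ih =>
    have hγ : msize γ < p := by omega
    have hS := sum_filter_lam_mul_pos hlam hγ fun j hj =>
      ih (mplus γ j) (by rw [msize_mplus hj]; omega)
    obtain ⟨hρ0, hρ1⟩ := hρ γ hγ
    rw [hφ.eq_of_lt γ hγ]
    rcases hρ1.lt_or_eq with hρ1 | hρ1
    · linarith [mul_nonneg hρ0 (hB γ).le, mul_pos (sub_pos.2 hρ1) hS]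
    · simpa [hρ1] using hB γ

theorem eq_of_rho_eq_one {γ : Model p} (hγ : msize γ < p) (h : ρ γ = 1) : φ γ = B γ := by
  simp [hφ.eq_of_lt γ hγ, h]

theorem rhoPost_eq (hB : ∀ γ, 0 < B γ) {γ : Model p} (hγ : msize γ < p) :
    rhoPost ρ B φ γ = ρ γ * B γ / φ γ := by
  by_cases h : ρ γ = 1
  · simp [rhoPost, h, hφ.eq_of_rho_eq_one hγ h, (hB γ).ne']
  · simp [rhoPost, h]

theorem sum_finalProbFrom_mul (hlam : ValidSel lam) {n : ℕ} {γ : Model p}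
    (hγ : msize γ + n = p) : ∑ γ', finalProbFrom ρ lam n γ γ' * B γ' = φ γ := by
  induction n generalizing γ with
  | zero => simp [finalProbFrom, hφ.eq_of_full γ hγ]
  | succ n ih =>
    have hlt : msize γ < p := by omega
    have hstep : ∑ γ', (∑ j, lam γ j * finalProbFrom ρ lam n (mplus γ j) γ') * B γ'
        = ∑ j ∈ univ.filter (fun j => γ j = false), lam γ j * φ (mplus γ j) := by
      calc ∑ γ', (∑ j, lam γ j * finalProbFrom ρ lam n (mplus γ j) γ') * B γ'
          = ∑ j, lam γ j * ∑ γ', finalProbFrom ρ lam n (mplus γ j) γ' * B γ' := by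
            simp only [sum_mul, mul_sum, mul_assoc]
            exact sum_comm
        _ = _ := by
            rw [← sum_filter_lam_mul_eq hlam hlt]
            exact sum_congr rfl fun j hj => by
              rw [ih (by rw [msize_mplus (by simpa using hj)]; omega)]
    simp only [finalProbFrom, add_mul, sum_add_distrib, mul_assoc, ← mul_sum, hstep, ite_mul,
      one_mul, zero_mul, sum_ite_eq, mem_univ, if_true]
    exact (hφ.eq_of_lt γ hlt).symm

variable (hρ : ValidStop ρ) (hlam : ValidSel lam) (hB : ∀ γ, 0 < B γ)
include hρ hlam hB

theorem sub_mul_pos {γ : Model p} (hγ : msize γ < p) (h : ρ γ ≠ 1) :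
    0 < φ γ - ρ γ * B γ := by
  have hS := sum_filter_lam_mul_pos hlam hγ fun j _ => hφ.pos hρ hlam hB (mplus γ j)
  have hρ1 : ρ γ < 1 := (hρ γ hγ).2.lt_of_ne h
  rw [hφ.eq_of_lt γ hγ]
  nlinarith

theorem rhoPost_mul {γ : Model p} (hγ : msize γ < p) :
    rhoPost ρ B φ γ * φ γ = ρ γ * B γ := by
  rw [hφ.rhoPost_eq hB hγ, div_mul_cancel₀ _ (hφ.pos hρ hlam hB γ).ne']

theorem one_sub_rhoPost_mul_lamPost {γ : Model p} (hγ : msize γ < p) (j : Fin p) :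
    (1 - rhoPost ρ B φ γ) * lamPost ρ lam B φ γ j * φ γ
      = (1 - ρ γ) * lam γ j * φ (mplus γ j) := by
  by_cases h : ρ γ = 1
  · simp [rhoPost, lamPost, h]
  · have hden := hφ.sub_mul_pos hρ hlam hB hγ h
    have hφγ := hφ.pos hρ hlam hB γ
    rw [hφ.rhoPost_eq hB hγ, lamPost, if_neg h]
    field_simp

theorem validStop_rhoPost : ValidStop (rhoPost ρ B φ) := by
  intro γ hγ
  have hφγ := hφ.pos hρ hlam hB γ
  have hle : ρ γ * B γ ≤ φ γ := by
    by_cases h : ρ γ = 1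
    · simp [h, hφ.eq_of_rho_eq_one hγ h]
    · linarith [hφ.sub_mul_pos hρ hlam hB hγ h]
  rw [hφ.rhoPost_eq hB hγ]
  exact ⟨div_nonneg (mul_nonneg (hρ γ hγ).1 (hB γ).le) hφγ.le, (div_le_one hφγ).2 hle⟩

theorem validSel_lamPost : ValidSel (lamPost ρ lam B φ) := by
  intro γ hγ
  obtain ⟨hnonneg, hsum, hzero⟩ := hlam γ hγ
  by_cases h : ρ γ = 1
  · simpa [lamPost, h] using hlam γ hγ
  have hden := hφ.sub_mul_pos hρ hlam hB hγ h
  have hden_eq : φ γ - ρ γ * B γ = ∑ j, lam γ j * ((1 - ρ γ) * φ (mplus γ j)) := by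
    rw [← sum_filter_lam_mul_eq hlam hγ, hφ.eq_of_lt γ hγ, add_sub_cancel_left, mul_sum]
    exact sum_congr rfl fun j _ => mul_left_comm _ _ _
  simp only [lamPost, if_neg h]
  refine ⟨fun j => div_nonneg (mul_nonneg (hnonneg j) (mul_nonneg ?_ ?_)) hden.le, ?_,
    fun j hj => by simp [hzero j hj]⟩
  · linarith [(hρ γ hγ).2]
  · exact (hφ.pos hρ hlam hB _).le
  · rw [← sum_div, ← hden_eq, div_self hden.ne']

theorem mul_finalProbFrom_post {n : ℕ} {γ : Model p} (hγ : msize γ + n = p) (γ' : Model p) :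
    φ γ * finalProbFrom (rhoPost ρ B φ) (lamPost ρ lam B φ) n γ γ'
      = B γ' * finalProbFrom ρ lam n γ γ' := by
  induction n generalizing γ with
  | zero =>
    by_cases h : γ = γ'
    · simp [finalProbFrom, h, hφ.eq_of_full γ' (by simpa [h] using hγ)]
    · simp [finalProbFrom, h]
  | succ n ih =>
    have hlt : msize γ < p := by omega
    have hδ : ρ γ * B γ * (if γ = γ' then 1 else 0)
        = B γ' * (ρ γ * (if γ = γ' then 1 else 0)) := by
      split_ifs with h <;> simp [h, mul_comm]
    let R := rhoPost ρ B φ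
    let Λ := lamPost ρ lam B φ
    calc φ γ * finalProbFrom R Λ (n + 1) γ γ'
        = R γ * φ γ * (if γ = γ' then 1 else 0)
          + ∑ j, (1 - R γ) * Λ γ j * φ γ * finalProbFrom R Λ n (mplus γ j) γ' := by
          simp only [finalProbFrom, mul_add, mul_sum]
          congr 1
          · ring
          · exact sum_congr rfl fun j _ => by ring
      _ = ρ γ * B γ * (if γ = γ' then 1 else 0)
          + ∑ j, lam γ j * ((1 - ρ γ) *
            (φ (mplus γ j) * finalProbFrom R Λ n (mplus γ j) γ')) := by
          simp only [R, Λ, hφ.rhoPost_mul hρ hlam hB hlt,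
            hφ.one_sub_rhoPost_mul_lamPost hρ hlam hB hlt]
          congr 1
          exact sum_congr rfl fun j _ => by ring
      _ = ρ γ * B γ * (if γ = γ' then 1 else 0)
          + ∑ j, lam γ j * ((1 - ρ γ) * (B γ' * finalProbFrom ρ lam n (mplus γ j) γ')) := by
          rw [← sum_filter_lam_mul_eq hlam hlt, ← sum_filter_lam_mul_eq hlam hlt]
          congr 1
          refine sum_congr rfl fun j hj => ?_
          rw [ih (by rw [msize_mplus (by simpa using hj)]; omega)]
      _ = B γ' * finalProbFrom ρ lam (n + 1) γ γ' := by
          rw [hδ, finalProbFrom, mul_add, mul_sum, mul_sum]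
          congr 1
          exact sum_congr rfl fun j _ => by ring

end IsHarmonicExtension

end Posterior

/-- **Information propagation.** If the prior `π` has pFS representation `(ρ, lam)` and `L > 0`
is the marginal likelihood, then the posterior `π(γ|D) ∝ π(γ)L(γ)` has the pFS representation
`(rhoPost, lamPost)` built from the recursively defined `φ`. -/
theorem posterior_pFS {p : ℕ} (π ρ : Model p → ℝ) (lam : Model p → Fin p → ℝ)
    (L φ : Model p → ℝ)
    (hpfs : IsPFS ρ lam) (hrep : ∀ γ, finalProb ρ lam γ = π γ)
    (hL : ∀ γ, 0 < L γ)
    (hφfull : ∀ γ : Model p, msize γ = p → φ γ = bf0 L γ)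
    (hφrec : ∀ γ : Model p, msize γ < p →
      φ γ = ρ γ * bf0 L γ + (1 - ρ γ) *
        ∑ j ∈ Finset.univ.filter (fun j => γ j = false), lam γ j * φ (mplus γ j)) :
    IsPFS (rhoPost ρ (bf0 L) φ) (lamPost ρ lam (bf0 L) φ) ∧
      ∀ γ : Model p, finalProb (rhoPost ρ (bf0 L) φ) (lamPost ρ lam (bf0 L) φ) γ
        = π γ * L γ / ∑ γ' : Model p, π γ' * L γ' := by
  have hB : ∀ γ, 0 < bf0 L γ := fun γ => div_pos (hL γ) (hL (mnull p))
  have hφ : IsHarmonicExtension ρ lam (bf0 L) φ := ⟨hφfull, hφrec⟩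
  have hpost : IsPFS (rhoPost ρ (bf0 L) φ) (lamPost ρ lam (bf0 L) φ) :=
    ⟨hφ.validStop_rhoPost hpfs.1 hpfs.2 hB, hφ.validSel_lamPost hpfs.1 hpfs.2 hB⟩
  refine ⟨hpost, fun γ => ?_⟩
  have hnull : msize (mnull p) + p = p := by rw [msize_mnull, zero_add]
  have hprior : ∀ γ', finalProbFrom ρ lam p (mnull p) γ' = π γ' := fun γ' => by
    rw [← finalProb_eq_finalProbFrom hpfs.2, hrep]
  have hevidence : ∑ γ', π γ' * L γ' = L (mnull p) * φ (mnull p) := by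
    rw [← hφ.sum_finalProbFrom_mul hpfs.2 hnull, mul_sum]
    exact sum_congr rfl fun γ' _ => by
      rw [hprior, bf0]
      field_simp [(hL (mnull p)).ne']
  have htransform := hφ.mul_finalProbFrom_post hpfs.1 hpfs.2 hB hnull γ
  rw [hprior, bf0, div_mul_eq_mul_div, eq_div_iff (hL _).ne'] at htransform
  have hφnull := hφ.pos hpfs.1 hpfs.2 hB (mnull p)
  rw [finalProb_eq_finalProbFrom hpost.2, hevidence, eq_div_iff (mul_pos (hL _) hφnull).ne']
  linear_combination htransform
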